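/- With notation as above (R_0 a commutative Noetherian domain, S = R_0[U_1,...,U_s], f ∈ S homogeneous nonzero of degree δ, d ≥ s): every maximal minor of M(f;d) lies in content(f)^{C(d−1,s−1)} ⊆ content(f), and moreover content(f) is contained in the radical of the ideal generated by the t × t minors of M(f;d), where t = C(d−1, s−1). -/

import Mathlib

open MvPolynomial

noncomputable section

/-- Index type for the monomial basis of the degree `-d` component of the module of
inverse polynomials `R₀[U₁⁻, …, U_s⁻]` (a monomial `U^{-λ}`, all `λᵢ ≥ 1`, `∑ λᵢ = d`,
is encoded by the tuple `μ = λ - 1` with `∑ μᵢ = d - s`). -/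
def InvBasis (s d : ℕ) : Type :=
  {μ : Fin s → ℕ // μ ∈ Finset.Nat.antidiagonalTuple s (d - s)}

instance (s d : ℕ) : DecidableEq (InvBasis s d) :=
  inferInstanceAs (DecidableEq {μ : Fin s → ℕ // μ ∈ Finset.Nat.antidiagonalTuple s (d - s)})

instance (s d : ℕ) : Fintype (InvBasis s d) :=
  inferInstanceAs (Fintype {μ : Fin s → ℕ // μ ∈ Finset.Nat.antidiagonalTuple s (d - s)})

/-- The matrix `M(f;d)` of multiplication by `f` from the degree `-(d+δ)` component to the
degree `-d` component of the module of inverse polynomials, in the monomial bases. -/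
def invMulMatrix {R₀ : Type*} [CommRing R₀] (s : ℕ) (f : MvPolynomial (Fin s) R₀)
    (δ d : ℕ) : Matrix (InvBasis s d) (InvBasis s (d + δ)) R₀ :=
  fun ρ μ =>
    if ∀ i, ρ.1 i ≤ μ.1 i then
      MvPolynomial.coeff (Finsupp.equivFunOnFinite.symm fun i => μ.1 i - ρ.1 i) f
    else 0

/-- The content of a multivariate polynomial: the ideal of `R₀` generated by all of its
coefficients. -/
def polyContent {R₀ : Type*} [CommRing R₀] {s : ℕ} (f : MvPolynomial (Fin s) R₀) :
    Ideal R₀ :=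
  Ideal.span (Set.range fun m => MvPolynomial.coeff m f)


/-!
Each term of the Leibniz expansion of a maximal minor is a product of `t` entries of `M(f;d)`,
all of them coefficients of `f`. For the radical, let `p` be a prime containing every maximal
minor and suppose some coefficient of `f` is not in `p`. Row `ρ` of `M(f;d)` is the coefficient
vector of `U^ρ f`, so a linear relation among the rows is a form `P` of degree `d - s` with
`P f = 0`. Over the fraction field of `R₀ ⧸ p` the image of `f` is nonzero, so the rows of the
reduced matrix are independent and some maximal minor is nonzero there, i.e. lies outside `p`.
-/

namespace Matrix

theorem det_mem_pow_card {R n : Type*} [CommRing R] [Fintype n] [DecidableEq n] {I : Ideal R}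
    {M : Matrix n n R} (h : ∀ i j, M i j ∈ I) : M.det ∈ I ^ Fintype.card n := by
  rw [det_apply, ← Finset.card_univ, ← Finset.prod_const]
  refine Submodule.sum_mem _ fun _ _ => ?_
  rw [Units.smul_def, zsmul_eq_mul]
  exact Ideal.mul_mem_left _ _ (Ideal.prod_mem_prod fun _ _ => h _ _)

theorem exists_injective_det_submatrix_ne_zero {m n K : Type*} [Field K] [Fintype m]
    [Fintype n] [DecidableEq m] {M : Matrix m n K} (h : LinearIndependent K M.row) :
    ∃ g : m → n, Function.Injective g ∧ (M.submatrix id g).det ≠ 0 := by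
  obtain ⟨κ, a, ha, hspan, hli⟩ := exists_linearIndependent' K M.col
  have : Finite κ := Finite.of_injective a ha
  have : Fintype κ := Fintype.ofFinite κ
  have hcard : Fintype.card m = Fintype.card κ := by
    rw [← h.rank_matrix, rank_eq_finrank_span_cols, ← hspan, finrank_span_eq_card hli]
  let e : m ≃ κ := Fintype.equivOfCardEq hcard
  refine ⟨a ∘ e, ha.comp e.injective, ?_⟩
  have hcols : LinearIndependent K (M.submatrix id (a ∘ e)).col := hli.comp e e.injective
  exact ((isUnit_iff_isUnit_det _).mp (linearIndependent_cols_iff_isUnit.mp hcols)).ne_zero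

end Matrix

namespace InvBasis

variable {s d : ℕ}

def toFinsupp (ρ : InvBasis s d) : Fin s →₀ ℕ := Finsupp.equivFunOnFinite.symm ρ.1

theorem toFinsupp_injective : Function.Injective (toFinsupp : InvBasis s d → Fin s →₀ ℕ) :=
  fun _ _ h => Subtype.ext (Finsupp.equivFunOnFinite.symm.injective h)

theorem degree_toFinsupp (ρ : InvBasis s d) : ρ.toFinsupp.degree = d - s := by
  rw [Finsupp.degree_eq_sum]
  exact Finset.Nat.mem_antidiagonalTuple.mp ρ.2

theorem exists_toFinsupp_eq {m : Fin s →₀ ℕ} (hm : m.degree = d - s) :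
    ∃ ρ : InvBasis s d, ρ.toFinsupp = m := by
  rw [Finsupp.degree_eq_sum] at hm
  exact ⟨⟨m, Finset.Nat.mem_antidiagonalTuple.mpr hm⟩, Finsupp.equivFunOnFinite.symm_apply_apply m⟩

theorem nonempty (hs : 1 ≤ s) : Nonempty (InvBasis s d) :=
  ⟨⟨Pi.single ⟨0, hs⟩ (d - s), Finset.Nat.mem_antidiagonalTuple.mpr (by simp)⟩⟩

end InvBasis

section InvMulMatrix

variable {R : Type*} [CommRing R] {s : ℕ} {f : MvPolynomial (Fin s) R} {δ d : ℕ}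

theorem polyContent_le_iff {I : Ideal R} : polyContent f ≤ I ↔ ∀ m, coeff m f ∈ I := by
  rw [polyContent, Ideal.span_le, Set.range_subset_iff]
  rfl

theorem invMulMatrix_apply (ρ : InvBasis s d) (μ : InvBasis s (d + δ)) :
    invMulMatrix s f δ d ρ μ =
      if ρ.toFinsupp ≤ μ.toFinsupp then coeff (μ.toFinsupp - ρ.toFinsupp) f else 0 := by
  simp only [invMulMatrix, InvBasis.toFinsupp, Finsupp.le_def]
  congr 2
  ext i
  simp

theorem invMulMatrix_mem_polyContent (ρ : InvBasis s d) (μ : InvBasis s (d + δ)) :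
    invMulMatrix s f δ d ρ μ ∈ polyContent f := by
  rw [invMulMatrix_apply]
  split_ifs
  · exact Ideal.subset_span ⟨_, rfl⟩
  · exact zero_mem _

theorem invMulMatrix_map {S : Type*} [CommRing S] (φ : R →+* S) :
    invMulMatrix s (map φ f) δ d = (invMulMatrix s f δ d).map φ := by
  ext ρ μ
  simp only [invMulMatrix_apply, Matrix.map_apply, coeff_map]
  split_ifs <;> simp

open Matrix in
theorem vecMul_invMulMatrix (c : InvBasis s d → R) (μ : InvBasis s (d + δ)) :
    (c ᵥ* invMulMatrix s f δ d) μ =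
      coeff μ.toFinsupp ((∑ ρ, monomial ρ.toFinsupp (c ρ)) * f) := by
  simp only [vecMul, dotProduct, Finset.sum_mul, coeff_sum, coeff_monomial_mul',
    invMulMatrix_apply]
  refine Finset.sum_congr rfl fun ρ _ => ?_
  split_ifs <;> simp

theorem linearIndependent_row_invMulMatrix [IsDomain R] (hf : f ≠ 0)
    (hhom : f.IsHomogeneous δ) (hd : s ≤ d) :
    LinearIndependent R (invMulMatrix s f δ d).row := by
  rw [Fintype.linearIndependent_iff]
  intro c hc
  set P : MvPolynomial (Fin s) R := ∑ ρ, monomial ρ.toFinsupp (c ρ)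
  have hP : P.IsHomogeneous (d - s) := IsHomogeneous.sum _ _ _ fun ρ _ =>
    isHomogeneous_monomial _ ρ.degree_toFinsupp
  have hPf : P * f = 0 := by
    ext m
    rw [coeff_zero]
    by_cases hm : m.degree = d + δ - s
    · obtain ⟨μ, rfl⟩ := InvBasis.exists_toFinsupp_eq hm
      rw [← vecMul_invMulMatrix, Matrix.vecMul_eq_sum]
      exact congrFun hc μ
    · exact (hP.mul hhom).coeff_eq_zero (by omega)
  intro ρ
  have hcoeff : coeff ρ.toFinsupp P = c ρ := by
    simp only [P, coeff_sum, coeff_monomial, InvBasis.toFinsupp_injective.eq_iff,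
      Finset.sum_ite_eq', Finset.mem_univ, if_true]
  rw [← hcoeff, (mul_eq_zero.mp hPf).resolve_right hf, coeff_zero]

theorem exists_det_submatrix_invMulMatrix_notMem {p : Ideal R} [p.IsPrime]
    (hp : ¬polyContent f ≤ p) (hhom : f.IsHomogeneous δ) (hd : s ≤ d) :
    ∃ g : InvBasis s d → InvBasis s (d + δ), Function.Injective g ∧
      ((invMulMatrix s f δ d).submatrix id g).det ∉ p := by
  let ψ : R →+* FractionRing (R ⧸ p) := (algebraMap _ _).comp (Ideal.Quotient.mk p)
  have hψ (x : R) : ψ x = 0 ↔ x ∈ p := by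
    simp [ψ, Ideal.Quotient.eq_zero_iff_mem]
  have hf : map ψ f ≠ 0 := fun h => hp <| polyContent_le_iff.mpr fun m => by
    rw [← hψ, ← coeff_map, h, coeff_zero]
  obtain ⟨g, hg, hdet⟩ := Matrix.exists_injective_det_submatrix_ne_zero
    (linearIndependent_row_invMulMatrix hf (hhom.map ψ) hd)
  refine ⟨g, hg, fun hmem => hdet ?_⟩
  rw [invMulMatrix_map, Matrix.submatrix_map, ← RingHom.mapMatrix_apply, ← RingHom.map_det,
    hψ]
  exact hmem

end InvMulMatrix

theorem stmt_16_general {R₀ : Type*} [CommRing R₀]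
    (s : ℕ) (hs : 1 ≤ s) (f : MvPolynomial (Fin s) R₀)
    (δ : ℕ) (hhom : f.IsHomogeneous δ) (d : ℕ) (hd : s ≤ d) :
    (∀ g : InvBasis s d → InvBasis s (d + δ), Function.Injective g →
        ((invMulMatrix s f δ d).submatrix id g).det ∈
          polyContent f ^ Fintype.card (InvBasis s d)) ∧
      polyContent f ^ Fintype.card (InvBasis s d) ≤ polyContent f ∧
      polyContent f ≤
        (Ideal.span {x : R₀ | ∃ g : InvBasis s d → InvBasis s (d + δ),
            Function.Injective g ∧
              ((invMulMatrix s f δ d).submatrix id g).det = x}).radical := by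
  have := InvBasis.nonempty (d := d) hs
  refine ⟨fun _ _ => Matrix.det_mem_pow_card fun _ _ => invMulMatrix_mem_polyContent _ _,
    Ideal.pow_le_self Fintype.card_ne_zero, ?_⟩
  rw [Ideal.radical_eq_sInf]
  refine le_sInf fun p ⟨hminors, hp⟩ => by_contra fun hcontent => ?_
  obtain ⟨g, hg, hdet⟩ := exists_det_submatrix_invMulMatrix_notMem hcontent hhom hd
  exact hdet (hminors (Ideal.subset_span ⟨g, hg, rfl⟩))

theorem stmt_16 {R₀ : Type*} [CommRing R₀] [IsDomain R₀] [IsNoetherianRing R₀]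
    (s : ℕ) (hs : 1 ≤ s) (f : MvPolynomial (Fin s) R₀) (hf : f ≠ 0)
    (δ : ℕ) (hhom : f.IsHomogeneous δ) (d : ℕ) (hd : s ≤ d) :
    (∀ g : InvBasis s d → InvBasis s (d + δ), Function.Injective g →
        ((invMulMatrix s f δ d).submatrix id g).det ∈
          polyContent f ^ Fintype.card (InvBasis s d)) ∧
      polyContent f ^ Fintype.card (InvBasis s d) ≤ polyContent f ∧
      polyContent f ≤
        (Ideal.span {x : R₀ | ∃ g : InvBasis s d → InvBasis s (d + δ),
            Function.Injective g ∧
              ((invMulMatrix s f δ d).submatrix id g).det = x}).radical :=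
  stmt_16_general s hs f δ hhom d hd

end
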